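/- arXiv:2408.12947 — 2 statements merged into one kernel-verified Lean document; each statement's English description precedes it below -/
import Mathlib

section
/- For every finite sequence π' = s1;…;sk of alias-free pointer statements, every set L of access paths, and every access path ρ ∈ L, the backward transfer satisfies R(π', ρ) ⊆ f_{s1}(f_{s2}(⋯ f_{sk}(L) ⋯)). (This is the alias-free core of the paper's soundness theorem for heap liveness analysis: every access path that, according to R, must be live before the sequence in order for ρ to be live after it, is indeed contained in the liveness set computed by composing the per-statement liveness transfer functions backwards over the sequence.) -/
/-- An access path: a root variable together with a finite sequence of fields. -/
abbrev AP (V F : Type*) := V × List F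

/-- Alias-free pointer statements. -/
inductive Stmt (V F : Type*)
  | use  (x : V)             -- use x
  | new  (x : V)             -- x = new
  | null (x : V)             -- x = null
  | copy (x y : V)           -- x = y
  | load (x y : V) (f : F)   -- x = y->f

variable {V F : Type*}

/-- The kill set of a statement (independent of the liveness set `L`). -/
def killS : Stmt V F → Set (AP V F)
  | .use _      => ∅
  | .new x      => {p | p.1 = x}
  | .null x     => {p | p.1 = x}
  | .copy x _   => {p | p.1 = x}
  | .load x _ _ => {p | p.1 = x}

/-- The gen set of a statement, parameterized by the liveness set `L` after it. -/
def genS : Stmt V F → Set (AP V F) → Set (AP V F)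
  | .use x, _      => {(x, [])}
  | .new _, _      => ∅
  | .null _, _     => ∅
  | .copy x y, L   => {p | ∃ σ, p = (y, σ) ∧ (x, σ) ∈ L}
  | .load x y f, L =>
      {p | ∃ σ, p = (y, f :: σ) ∧ (x, σ) ∈ L} ∪ {p | p = (y, []) ∧ ∃ σ, (x, σ) ∈ L}

/-- The liveness transfer function `f_s(L) = (L \ kill_s(L)) ∪ gen_s(L)`. -/
def transfer (s : Stmt V F) (L : Set (AP V F)) : Set (AP V F) :=
  (L \ killS s) ∪ genS s L

variable [DecidableEq V]

/-- Backward transfer `R(s, ρ)` of a single alias-free statement on an access path. -/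
def R1 : Stmt V F → AP V F → Set (AP V F)
  | .use _, ρ      => {ρ}
  | .copy x y, ρ   => if ρ.1 = x then {(y, ρ.2)} else {ρ}
  | .load x y f, ρ => if ρ.1 = x then {(y, f :: ρ.2)} else {ρ}
  | .new x, ρ      => if ρ.1 = x then ∅ else {ρ}
  | .null x, ρ     => if ρ.1 = x then ∅ else {ρ}

/-- Backward transfer over a sequence of statements:
`R(ε, ρ) = {ρ}` and `R(s₁;…;s_k, ρ) = ⋃_{ρ' ∈ R(s₂;…;s_k, ρ)} R(s₁, ρ')`. -/
def Rseq : List (Stmt V F) → AP V F → Set (AP V F)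
  | [], ρ        => {ρ}
  | s :: rest, ρ => ⋃ ρ' ∈ Rseq rest ρ, R1 s ρ'

/-- If `s` kills the root of `ρ`, then `R(s, ρ)` is the path that `ρ ∈ L` puts into `gen_s(L)`;
otherwise `ρ` survives the kill. -/
theorem R1_subset_transfer {s : Stmt V F} {ρ : AP V F} {L : Set (AP V F)} (hρ : ρ ∈ L) :
    R1 s ρ ⊆ transfer s L := by
  obtain ⟨v, σ⟩ := ρ
  cases s <;> simp only [R1] <;> (try split_ifs) <;> grind [transfer, killS, genS]

/-- **Soundness (alias-free core).** For every sequence `π' = s₁;…;s_k` of alias-free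
pointer statements, every set `L` of access paths and every `ρ ∈ L`,
`R(π', ρ) ⊆ f_{s₁}(f_{s₂}(⋯ f_{s_k}(L) ⋯))`. -/
theorem soundness_alias_free (π : List (Stmt V F)) (L : Set (AP V F)) (ρ : AP V F)
    (hρ : ρ ∈ L) :
    Rseq π ρ ⊆ List.foldr transfer L π := by
  induction π with
  | nil => simpa [Rseq] using hρ
  | cons s rest ih =>
    simpa only [Rseq, List.foldr_cons, Set.iUnion₂_subset_iff] using
      fun ρ' hρ' => R1_subset_transfer (ih hρ')
end

section
/- For each alias-free pointer statement s, the liveness transfer function preserves prefix-closedness: if L is a prefix-closed set of access paths, then f_s(L) = (L \ kill_s(L)) ∪ gen_s(L) is also prefix-closed. -/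
variable {V F : Type*}

/-- A set of access paths is prefix-closed if with every member it contains
all its prefixes (same root variable, a prefix of the field sequence). -/
def PrefixClosed (L : Set (AP V F)) : Prop :=
  ∀ (v : V) (σ σ' : List F), (v, σ ++ σ') ∈ L → (v, σ) ∈ L

namespace PrefixClosed

variable {L K : Set (AP V F)}

theorem inter (hL : PrefixClosed L) (hK : PrefixClosed K) : PrefixClosed (L ∩ K) :=
  fun v σ σ' h => ⟨hL v σ σ' h.1, hK v σ σ' h.2⟩

theorem union (hL : PrefixClosed L) (hK : PrefixClosed K) : PrefixClosed (L ∪ K) :=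
  fun v σ σ' h => h.imp (hL v σ σ') (hK v σ σ')

-- `PrefixClosed Kᶜ` says that `K` is closed under extending paths, as every kill set is.
theorem diff (hL : PrefixClosed L) (hK : PrefixClosed Kᶜ) : PrefixClosed (L \ K) :=
  hL.inter hK

end PrefixClosed

theorem prefixClosed_empty : PrefixClosed (∅ : Set (AP V F)) :=
  fun _ _ _ h => h

theorem prefixClosed_singleton_nil (x : V) : PrefixClosed ({(x, [])} : Set (AP V F)) := by
  intro v σ σ' h
  obtain ⟨rfl, hσ⟩ := Prod.mk.inj h
  obtain ⟨rfl, -⟩ := List.append_eq_nil_iff.mp hσ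
  rfl

theorem prefixClosed_compl_root (x : V) : PrefixClosed ({p | p.1 = x} : Set (AP V F))ᶜ :=
  fun _ _ _ h => h

theorem prefixClosed_compl_killS (s : Stmt V F) : PrefixClosed (killS s)ᶜ := by
  cases s with
  | use _ => exact fun _ _ _ _ => id
  | new x | null x | copy x _ | load x _ _ => exact prefixClosed_compl_root x

variable {L : Set (AP V F)}

theorem prefixClosed_genS_copy (x y : V) (hL : PrefixClosed L) :
    PrefixClosed (genS (.copy x y) L) := by
  rintro v σ σ' ⟨τ, hp, hx⟩
  obtain ⟨rfl, rfl⟩ := Prod.mk.inj hp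
  exact ⟨σ, rfl, hL x σ σ' hx⟩

-- The prefix `y` of `y.f.σ` is generated by the second component, since `x.σ ∈ L`.
theorem prefixClosed_genS_load (x y : V) (f : F) (hL : PrefixClosed L) :
    PrefixClosed (genS (.load x y f) L) := by
  rintro v σ σ' (⟨τ, hp, hx⟩ | ⟨hp, hx⟩)
  · obtain ⟨rfl, hτ⟩ := Prod.mk.inj hp
    cases σ with
    | nil => exact Or.inr ⟨rfl, τ, hx⟩
    | cons g σ₀ =>
      obtain ⟨rfl, rfl⟩ := List.cons.inj hτ
      exact Or.inl ⟨σ₀, rfl, hL x σ₀ σ' hx⟩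
  · obtain ⟨rfl, hσ⟩ := Prod.mk.inj hp
    obtain ⟨rfl, -⟩ := List.append_eq_nil_iff.mp hσ
    exact Or.inr ⟨rfl, hx⟩

theorem prefixClosed_genS (s : Stmt V F) (hL : PrefixClosed L) : PrefixClosed (genS s L) := by
  cases s with
  | use x => exact prefixClosed_singleton_nil x
  | new _ | null _ => exact prefixClosed_empty
  | copy x y => exact prefixClosed_genS_copy x y hL
  | load x y f => exact prefixClosed_genS_load x y f hL

/-- The liveness transfer function of every alias-free pointer statement preserves
prefix-closedness. -/
theorem transfer_prefixClosed (s : Stmt V F) (L : Set (AP V F)) (hL : PrefixClosed L) :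
    PrefixClosed (transfer s L) :=
  (hL.diff (prefixClosed_compl_killS s)).union (prefixClosed_genS s hL)
end
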